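/- arXiv:2502.06749 — 6 statements merged into one kernel-verified Lean document; each statement's English description precedes it below -/
import Mathlib

section
/- Let d ≥ 1, let the coordinates {1,…,d} be partitioned into disjoint sets D (desirable) and U (undesirable) with D ∪ U = {1,…,d}, let c ∈ ℝ^d satisfy c_f > 0 for all f, let y ∈ ℝ^d satisfy y_f ≥ 0 for all f, and let α > 0. Suppose there exists f* ∈ D with y_{f*} > 0 such that y_f/c_f < y_{f*}/c_{f*} for every f ∈ U. Then every minimizer e of the linear cost cᵀe over {e ∈ ℝ^d : e ≥ 0, yᵀe ≥ α} satisfies e_f = 0 for all f ∈ U; consequently, √(Σ_{f∈D} e_f²) ≥ β·√(Σ_f e_f²) for every β ∈ (0,1], i.e., every best response is a β-desirable effort profile for every β ∈ (0,1]. -/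
/-!
Exchange argument: if a minimizer `e` put effort `e f > 0` on an undesirable feature `f`, moving
the score `y f * e f` it earns onto `f*` (effort `y f * e f / y f*` there) keeps the score and
strictly lowers the cost, since `f*` earns more score per unit of cost. Hence `e` vanishes on `U`,
its Euclidean norm is that of `e_D`, and `β ≤ 1` does the rest.
-/

open Finset Matrix

variable {ι : Type*} [DecidableEq ι]

def shiftEffort (e : ι → ℝ) (f g : ι) (t : ℝ) : ι → ℝ :=
  e - Pi.single f (e f) + Pi.single g t

theorem dotProduct_shiftEffort [Fintype ι] (w e : ι → ℝ) (f g : ι) (t : ℝ) :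
    w ⬝ᵥ shiftEffort e f g t = w ⬝ᵥ e - w f * e f + w g * t := by
  simp only [shiftEffort, dotProduct_add, dotProduct_sub, dotProduct_single]

theorem shiftEffort_nonneg {e : ι → ℝ} (he : 0 ≤ e) (f g : ι) {t : ℝ} (ht : 0 ≤ t) :
    0 ≤ shiftEffort e f g t := by
  intro i
  have hsingle : 0 ≤ Pi.single (M := fun _ => ℝ) g t i := by
    rcases eq_or_ne i g with rfl | hig <;> simp [*]
  rcases eq_or_ne i f with rfl | hif
  · simpa [shiftEffort] using hsingle
  · simpa [shiftEffort, hif] using add_nonneg (he i) hsingle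

theorem eq_zero_of_div_lt_of_isMinimal [Fintype ι] {c y e : ι → ℝ} {f g : ι}
    (hcf : 0 < c f) (hcg : 0 < c g) (hyf : 0 ≤ y f) (hyg : 0 < y g)
    (hratio : y f / c f < y g / c g) (he : 0 ≤ e)
    (hmin : ∀ e', 0 ≤ e' → y ⬝ᵥ e ≤ y ⬝ᵥ e' → c ⬝ᵥ e ≤ c ⬝ᵥ e') :
    e f = 0 := by
  by_contra hne
  have hef : 0 < e f := (he f).lt_of_ne' hne
  set t := y f * e f / y g
  have hscore : y ⬝ᵥ shiftEffort e f g t = y ⬝ᵥ e := by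
    rw [dotProduct_shiftEffort, mul_div_cancel₀ _ hyg.ne']
    ring
  have hcheaper : c g * t < c f * e f := by
    have hcross : y f * c g < y g * c f := (div_lt_div_iff₀ hcf hcg).1 hratio
    rw [show c g * t = (y f * c g) * e f / y g by ring, div_lt_iff₀ hyg]
    nlinarith
  have hcost : c ⬝ᵥ shiftEffort e f g t < c ⬝ᵥ e := by
    rw [dotProduct_shiftEffort]
    linarith
  exact (hmin _ (shiftEffort_nonneg he f g (by positivity)) hscore.ge).not_gt hcost

theorem stmt_3_general (d : ℕ) (D U : Finset (Fin d))
    (hunion : D ∪ U = Finset.univ)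
    (c : Fin d → ℝ) (hc : ∀ f, 0 < c f)
    (y : Fin d → ℝ) (hy : ∀ f, 0 ≤ y f) (α : ℝ)
    (fstar : Fin d) (hystar : 0 < y fstar)
    (hbpb : ∀ f ∈ U, y f / c f < y fstar / c fstar)
    (e : Fin d → ℝ) (hpos : ∀ f, 0 ≤ e f) (hfeas : α ≤ ∑ f, y f * e f)
    (hopt : ∀ e' : Fin d → ℝ, (∀ f, 0 ≤ e' f) → α ≤ ∑ f, y f * e' f →
      ∑ f, c f * e f ≤ ∑ f, c f * e' f) :
    (∀ f ∈ U, e f = 0) ∧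
    ∀ β : ℝ, 0 < β → β ≤ 1 →
      β * Real.sqrt (∑ f, e f ^ 2) ≤ Real.sqrt (∑ f ∈ D, e f ^ 2) := by
  have hU : ∀ f ∈ U, e f = 0 := fun f hf =>
    eq_zero_of_div_lt_of_isMinimal (hc f) (hc fstar) (hy f) hystar (hbpb f hf) hpos
      fun e' he' hscore => hopt e' he' (hfeas.trans hscore)
  have hsq : ∑ f, e f ^ 2 = ∑ f ∈ D, e f ^ 2 := by
    refine (sum_subset (subset_univ D) fun f _ hfD => ?_).symm
    have hfU : f ∈ U := (mem_union.1 (hunion ▸ mem_univ f)).resolve_left hfD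
    rw [hU f hfU, zero_pow two_ne_zero]
  refine ⟨hU, fun β _ hβ => ?_⟩
  rw [hsq]
  exact mul_le_of_le_one_left (Real.sqrt_nonneg _) hβ

/-- If there is a desirable feature `f* ∈ D` with `y f* > 0` whose
bang-per-buck strictly dominates that of every undesirable feature, then every
minimizer of the linear cost `cᵀe` over `{e ≥ 0 : yᵀe ≥ α}` puts zero effort on
all undesirable features, hence is β-desirable for every β ∈ (0,1]. -/
theorem stmt_3 (d : ℕ) (hd : 1 ≤ d) (D U : Finset (Fin d))
    (hdisj : Disjoint D U) (hunion : D ∪ U = Finset.univ)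
    (c : Fin d → ℝ) (hc : ∀ f, 0 < c f)
    (y : Fin d → ℝ) (hy : ∀ f, 0 ≤ y f) (α : ℝ) (hα : 0 < α)
    (fstar : Fin d) (hfstar : fstar ∈ D) (hystar : 0 < y fstar)
    (hbpb : ∀ f ∈ U, y f / c f < y fstar / c fstar)
    (e : Fin d → ℝ) (hpos : ∀ f, 0 ≤ e f) (hfeas : α ≤ ∑ f, y f * e f)
    (hopt : ∀ e' : Fin d → ℝ, (∀ f, 0 ≤ e' f) → α ≤ ∑ f, y f * e' f →
      ∑ f, c f * e f ≤ ∑ f, c f * e' f) :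
    (∀ f ∈ U, e f = 0) ∧
    ∀ β : ℝ, 0 < β → β ≤ 1 →
      β * Real.sqrt (∑ f, e f ^ 2) ≤ Real.sqrt (∑ f ∈ D, e f ^ 2) :=
  stmt_3_general d D U hunion c hc y hy α fstar hystar hbpb e hpos hfeas hopt
end

section
/- Let d ≥ 1, p > 1, let c ∈ ℝ^d satisfy c_f > 0 for all f, let y ∈ ℝ^d satisfy y_f ≥ 0 for all f with y ≠ 0, and let α > 0. Set S = Σ_g y_g · (y_g/c_g)^{1/(p-1)} (which is strictly positive) and define e* ∈ ℝ^d by e*_f = (α/S) · (y_f/c_f)^{1/(p-1)}. Then e* ≥ 0, yᵀe* = α, and e* minimizes the weighted ℓp cost Cost(e) = (Σ_f c_f e_f^p)^{1/p} over the set {e ∈ ℝ^d : e ≥ 0, yᵀe ≥ α}. In particular, the optimal effort invested in each feature f is proportional to (y_f/c_f)^{1/(p-1)}. -/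
/-!
Put `w f = (y f / c f) ^ (1 / (p - 1))`. Then `y f = c f * w f ^ (p - 1)` and
`y f * w f = c f * w f ^ p`, so `S = ∑ c w ^ p`. For the conjugate exponent `q = p / (p - 1)`
one has `(w ^ (p - 1)) ^ q = w ^ p`, so Hölder's inequality with weights `c` gives, for every
feasible `e`, `α ≤ ∑ y e = ∑ c w ^ (p - 1) e ≤ S ^ (1 / q) * Cost e`,
while `Cost e* = (α / S) * S ^ (1 / p) = α / S ^ (1 / q)`.
-/

open Finset Real

section

variable {ι : Type*} [Fintype ι] {p q : ℝ} {c a b w e : ι → ℝ}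

lemma rpow_one_div_mul_rpow {x a : ℝ} (hx : 0 ≤ x) (ha : 0 ≤ a) (hp : p ≠ 0) :
    (x ^ (1 / p) * a) ^ p = x * a ^ p := by
  rw [mul_rpow (rpow_nonneg hx _) ha, one_div, rpow_inv_rpow hx hp]

lemma rpow_one_div_sub_one_rpow_sub_one {x : ℝ} (hx : 0 ≤ x) (hp : 1 < p) :
    (x ^ (1 / (p - 1))) ^ (p - 1) = x := by
  rw [one_div, rpow_inv_rpow hx (sub_pos.2 hp).ne']

lemma inner_le_weighted_Lp_mul_Lq (hpq : p.HolderConjugate q) (hc : ∀ i, 0 ≤ c i)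
    (ha : ∀ i, 0 ≤ a i) (hb : ∀ i, 0 ≤ b i) :
    ∑ i, c i * a i * b i ≤
      (∑ i, c i * a i ^ p) ^ (1 / p) * (∑ i, c i * b i ^ q) ^ (1 / q) := by
  have holder := inner_le_Lp_mul_Lq_of_nonneg univ hpq
    (f := fun i ↦ c i ^ (1 / p) * a i) (g := fun i ↦ c i ^ (1 / q) * b i)
    (fun i _ ↦ mul_nonneg (rpow_nonneg (hc i) _) (ha i))
    (fun i _ ↦ mul_nonneg (rpow_nonneg (hc i) _) (hb i))
  simp only [rpow_one_div_mul_rpow (hc _) (ha _) hpq.ne_zero,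
    rpow_one_div_mul_rpow (hc _) (hb _) hpq.symm.ne_zero] at holder
  convert holder using 2 with i
  have hsplit : c i ^ (1 / p) * c i ^ (1 / q) = c i := by
    rw [← rpow_add' (hc i) (by simp [hpq.inv_add_inv_eq_one]), one_div, one_div,
      hpq.inv_add_inv_eq_one, rpow_one]
  calc c i * a i * b i = c i ^ (1 / p) * c i ^ (1 / q) * a i * b i := by rw [hsplit]
    _ = _ := by ring

lemma weighted_Lp_const_mul (hp : p ≠ 0) (hc : ∀ i, 0 ≤ c i) (hw : ∀ i, 0 ≤ w i) {t : ℝ}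
    (ht : 0 ≤ t) :
    (∑ i, c i * (t * w i) ^ p) ^ (1 / p) = t * (∑ i, c i * w i ^ p) ^ (1 / p) := by
  simp only [mul_rpow ht (hw _), mul_left_comm (c _), ← mul_sum]
  rw [mul_rpow (rpow_nonneg ht _) (sum_nonneg fun i _ ↦ mul_nonneg (hc i) (rpow_nonneg (hw i) _)),
    one_div, rpow_rpow_inv ht hp]

lemma weighted_Lp_const_mul_le_of_le_sum (hp : 1 < p) (hc : ∀ i, 0 ≤ c i) (hw : ∀ i, 0 ≤ w i)
    (hK : 0 < ∑ i, c i * w i ^ p) {α : ℝ} (hα : 0 ≤ α) (he : ∀ i, 0 ≤ e i)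
    (hαe : α ≤ ∑ i, c i * w i ^ (p - 1) * e i) :
    (∑ i, c i * (α / (∑ j, c j * w j ^ p) * w i) ^ p) ^ (1 / p) ≤
      (∑ i, c i * e i ^ p) ^ (1 / p) := by
  set K := ∑ j, c j * w j ^ p
  set q := p / (p - 1)
  have hpq : p.HolderConjugate q := .conjExponent hp
  have hwq : ∀ i, (w i ^ (p - 1)) ^ q = w i ^ p := fun i ↦ by
    rw [← rpow_mul (hw i), mul_div_cancel₀ _ (sub_pos.2 hp).ne']
  have holder := inner_le_weighted_Lp_mul_Lq hpq.symm hc (fun i ↦ rpow_nonneg (hw i) (p - 1)) he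
  simp only [hwq] at holder
  have hKq : 0 < K ^ (1 / q) := rpow_pos_of_pos hK _
  have hKp : K ^ (1 / p) = K / K ^ (1 / q) := by
    rw [eq_div_iff hKq.ne', ← rpow_add hK, hpq.one_div_add_one_div, one_div_one, rpow_one]
  rw [weighted_Lp_const_mul hpq.ne_zero hc hw (div_nonneg hα hK.le), hKp,
    div_mul_div_cancel₀ hK.ne', div_le_iff₀ hKq, mul_comm]
  exact hαe.trans holder

end

theorem stmt_4_general (d : ℕ) (p : ℝ) (hp : 1 < p)
    (c : Fin d → ℝ) (hc : ∀ f, 0 < c f)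
    (y : Fin d → ℝ) (hy : ∀ f, 0 ≤ y f) (hy0 : y ≠ 0)
    (α : ℝ) (hα : 0 < α) :
    let S : ℝ := ∑ g, y g * (y g / c g) ^ (1 / (p - 1))
    let estar : Fin d → ℝ := fun f => (α / S) * (y f / c f) ^ (1 / (p - 1))
    0 < S ∧ (∀ f, 0 ≤ estar f) ∧ (∑ f, y f * estar f) = α ∧
    ∀ e : Fin d → ℝ, (∀ f, 0 ≤ e f) → α ≤ ∑ f, y f * e f →
      (∑ f, c f * estar f ^ p) ^ (1 / p) ≤ (∑ f, c f * e f ^ p) ^ (1 / p) := by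
  intro S estar
  set w : Fin d → ℝ := fun f ↦ (y f / c f) ^ (1 / (p - 1))
  have hw : ∀ f, 0 ≤ w f := fun f ↦ rpow_nonneg (div_nonneg (hy f) (hc f).le) _
  have hyw : ∀ f, y f = c f * w f ^ (p - 1) := fun f ↦ by
    rw [rpow_one_div_sub_one_rpow_sub_one (div_nonneg (hy f) (hc f).le) hp,
      mul_div_cancel₀ _ (hc f).ne']
  have hSK : S = ∑ f, c f * w f ^ p := sum_congr rfl fun f _ ↦ by
    change y f * w f = _
    rw [hyw f, mul_assoc, ← rpow_add_one' (hw f) (by linarith), sub_add_cancel]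
  obtain ⟨f₀, hf₀⟩ := Function.ne_iff.1 hy0
  have hS : 0 < S := sum_pos' (fun f _ ↦ mul_nonneg (hy f) (hw f))
    ⟨f₀, mem_univ _, mul_pos ((hy f₀).lt_of_ne' hf₀)
      (rpow_pos_of_pos (div_pos ((hy f₀).lt_of_ne' hf₀) (hc f₀)) _)⟩
  refine ⟨hS, fun f ↦ mul_nonneg (div_nonneg hα.le hS.le) (hw f), ?_, fun e he hαe ↦ ?_⟩
  · simp only [estar, mul_left_comm (y _), ← mul_sum]
    exact div_mul_cancel₀ α hS.ne'
  · have hαe' : α ≤ ∑ f, c f * w f ^ (p - 1) * e f := by simpa only [← hyw] using hαe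
    have := weighted_Lp_const_mul_le_of_le_sum hp (fun f ↦ (hc f).le) hw (hSK ▸ hS) hα.le he hαe'
    rwa [← hSK] at this

/-- For ℓp costs with p > 1, setting
`S = ∑ g, y g * (y g / c g)^(1/(p-1)) > 0` and
`e* f = (α / S) * (y f / c f)^(1/(p-1))`, the profile `e*` is nonnegative,
satisfies `yᵀe* = α`, and minimizes the weighted ℓp cost over
`{e ≥ 0 : yᵀe ≥ α}`: the optimal effort in each feature is proportional
to `(y f / c f)^(1/(p-1))`. -/
theorem stmt_4 (d : ℕ) (hd : 1 ≤ d) (p : ℝ) (hp : 1 < p)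
    (c : Fin d → ℝ) (hc : ∀ f, 0 < c f)
    (y : Fin d → ℝ) (hy : ∀ f, 0 ≤ y f) (hy0 : y ≠ 0)
    (α : ℝ) (hα : 0 < α) :
    let S : ℝ := ∑ g, y g * (y g / c g) ^ (1 / (p - 1))
    let estar : Fin d → ℝ := fun f => (α / S) * (y f / c f) ^ (1 / (p - 1))
    0 < S ∧ (∀ f, 0 ≤ estar f) ∧ (∑ f, y f * estar f) = α ∧
    ∀ e : Fin d → ℝ, (∀ f, 0 ≤ e f) → α ≤ ∑ f, y f * e f →
      (∑ f, c f * estar f ^ p) ^ (1 / p) ≤ (∑ f, c f * e f ^ p) ^ (1 / p) :=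
  stmt_4_general d p hp c hc y hy hy0 α hα
end

section
/- Let d ≥ 1, let S be a symmetric positive definite real d×d matrix, let μ ∈ ℝ^d, let α > 0, and let p ∈ ℝ. Then the set { e ∈ ℝ^d : α − μᵀe − p·‖S e‖₂ ≤ 0 } is nonempty if and only if p > −‖S⁻¹ μ‖₂, where ‖·‖₂ denotes the Euclidean norm. -/
/-- For `S` symmetric positive definite, `μ ∈ ℝ^d`, `α > 0`,
`p ∈ ℝ`, the set `{e : α − μᵀe − p ‖S e‖₂ ≤ 0}` is nonempty iff
`p > −‖S⁻¹ μ‖₂`. -/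
theorem stmt_12 (d : ℕ) (hd : 1 ≤ d) (S : Matrix (Fin d) (Fin d) ℝ)
    (hS : S.PosDef) (hSsymm : S.IsSymm)
    (μ : Fin d → ℝ) (α : ℝ) (hα : 0 < α) (p : ℝ) :
    {e : Fin d → ℝ |
        α - ∑ f, μ f * e f - p * Real.sqrt (∑ f, S.mulVec e f ^ 2) ≤ 0}.Nonempty
      ↔ -Real.sqrt (∑ f, S⁻¹.mulVec μ f ^ 2) < p := by
  have hdet : IsUnit S.det := isUnit_iff_ne_zero.mpr (ne_of_gt hS.det_pos)
  set v : Fin d → ℝ := S⁻¹.mulVec μ with hv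
  have hSv : S.mulVec v = μ := by
    rw [hv, Matrix.mulVec_mulVec, Matrix.mul_nonsing_inv S hdet, Matrix.one_mulVec]
  -- key: μᵀ e = vᵀ (S e)
  have key : ∀ e : Fin d → ℝ, ∑ f, μ f * e f = ∑ f, v f * S.mulVec e f := by
    intro e
    have h1 : (∑ f, v f * S.mulVec e f) = dotProduct v (S.mulVec e) := rfl
    have h2 : (∑ f, μ f * e f) = dotProduct μ e := rfl
    rw [h1, h2, Matrix.dotProduct_mulVec,
      show Matrix.vecMul v S = μ by rw [← hSsymm.eq, Matrix.vecMul_transpose, hSv]]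
  set nv : ℝ := Real.sqrt (∑ f, v f ^ 2) with hnv
  have hnv0 : 0 ≤ nv := Real.sqrt_nonneg _
  constructor
  · rintro ⟨e, he⟩
    simp only [Set.mem_setOf_eq] at he
    set nS : ℝ := Real.sqrt (∑ f, S.mulVec e f ^ 2) with hnS
    have hnS0 : 0 ≤ nS := Real.sqrt_nonneg _
    -- Cauchy-Schwarz
    have hcs : (∑ f, v f * S.mulVec e f) ≤ nv * nS := by
      have h := Finset.sum_mul_sq_le_sq_mul_sq Finset.univ v (S.mulVec e)
      have h2 : nv * nS = Real.sqrt ((∑ f, v f ^ 2) * ∑ f, S.mulVec e f ^ 2) := by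
        rw [Real.sqrt_mul (by positivity)]
      rw [h2]
      calc (∑ f, v f * S.mulVec e f) ≤ |∑ f, v f * S.mulVec e f| := le_abs_self _
        _ = Real.sqrt ((∑ f, v f * S.mulVec e f) ^ 2) := (Real.sqrt_sq_eq_abs _).symm
        _ ≤ _ := Real.sqrt_le_sqrt h
    rw [key e] at he
    by_contra hle
    push_neg at hle
    nlinarith [mul_nonneg hnv0 hnS0]
  · intro hp
    -- choose direction w
    by_cases hvz : v = 0
    · -- then μ = 0 and p > 0
      have hμ0 : μ = 0 := by rw [← hSv, hvz, Matrix.mulVec_zero]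
      have hnv0' : nv = 0 := by
        simp [hnv, hvz]
      have hp0 : 0 < p := by rw [hnv0'] at hp; linarith
      have i0 : Fin d := ⟨0, hd⟩
      set w : Fin d → ℝ := Pi.single i0 1 with hw
      have hws : (∑ f, w f ^ 2) = 1 := by
        rw [hw]
        rw [Finset.sum_eq_single i0]
        · simp
        · intro b _ hb; simp [Pi.single_apply, hb]
        · simp
      refine ⟨(α / p) • (S⁻¹.mulVec w), ?_⟩
      simp only [Set.mem_setOf_eq]
      have hSe : S.mulVec ((α / p) • (S⁻¹.mulVec w)) = (α / p) • w := by
        rw [Matrix.mulVec_smul, Matrix.mulVec_mulVec, Matrix.mul_nonsing_inv S hdet,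
          Matrix.one_mulVec]
      rw [hSe, hμ0]
      have h1 : (∑ f, ((α / p) • w) f ^ 2) = (α / p) ^ 2 := by
        simp only [Pi.smul_apply, smul_eq_mul, mul_pow, ← Finset.mul_sum, hws, mul_one]
      rw [h1, Real.sqrt_sq (div_pos hα hp0).le]
      have heq : p * (α / p) = α := by field_simp
      simp only [Pi.zero_apply, zero_mul, Finset.sum_const_zero]
      linarith
    · -- v ≠ 0 : use w = v
      have hsv : 0 < ∑ f, v f ^ 2 := by
        rcases Function.ne_iff.mp hvz with ⟨i, hi⟩
        have : 0 < v i ^ 2 := lt_of_le_of_ne (sq_nonneg _) (Ne.symm (pow_ne_zero 2 hi))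
        exact lt_of_lt_of_le this (Finset.single_le_sum (fun j _ => sq_nonneg (v j))
          (Finset.mem_univ i))
      have hnvpos : 0 < nv := Real.sqrt_pos.mpr hsv
      have hc : 0 < nv * (nv + p) := mul_pos hnvpos (by linarith)
      set t : ℝ := α / (nv * (nv + p)) with ht
      have htpos : 0 < t := div_pos hα hc
      refine ⟨t • (S⁻¹.mulVec v), ?_⟩
      simp only [Set.mem_setOf_eq]
      have hSe : S.mulVec (t • (S⁻¹.mulVec v)) = t • v := by
        rw [Matrix.mulVec_smul, Matrix.mulVec_mulVec, Matrix.mul_nonsing_inv S hdet,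
          Matrix.one_mulVec]
      rw [key, hSe]
      have h1 : (∑ f, v f * (t • v) f) = t * ∑ f, v f ^ 2 := by
        simp only [Pi.smul_apply, smul_eq_mul]
        rw [Finset.mul_sum]
        exact Finset.sum_congr rfl (fun f _ => by ring)
      have h2 : Real.sqrt (∑ f, (t • v) f ^ 2) = t * nv := by
        simp only [Pi.smul_apply, smul_eq_mul, mul_pow, ← Finset.mul_sum]
        rw [Real.sqrt_mul (by positivity), Real.sqrt_sq htpos.le]
      rw [h1, h2]
      have hnv2 : nv ^ 2 = ∑ f, v f ^ 2 := Real.sq_sqrt hsv.le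
      have : t * (nv * (nv + p)) = α := by
        rw [ht, div_mul_cancel₀ _ (ne_of_gt hc)]
      nlinarith [this, hnv2]
end

section
/- Let c > 0, m > 0, σ > 0, α > 0 and p < 0 be real numbers with m > −p·σ. Consider the feasible set F = { e ∈ ℝ² : α ≤ m·(e₁ + e₂) + p·σ·√(e₁² + e₂²) }. Then: (i) the symmetric point e' = (t, t) with t = α / (2(m + pσ/√2)) belongs to F and has ℓ1 cost c(|e'₁| + |e'₂|) = cα/(m + pσ/√2); (ii) every e ∈ F with e₁ = 0 or e₂ = 0 satisfies c(|e₁| + |e₂|) ≥ cα/(m + pσ) > cα/(m + pσ/√2). Consequently, no minimizer of the weighted ℓ1 cost over F is supported on a single coordinate, i.e., under partially incomplete information the optimal ℓ1-cost effort profile can require investing in more than one feature. -/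
/-!
Write `q = pσ < 0`. On the diagonal `√(t² + t²) = √2·t`, so the constraint reads
`α ≤ 2t(m + q/√2)` and the symmetric point costs `cα/(m + q/√2)`. On a coordinate axis the
norm is the ℓ1 norm, so the constraint forces `α ≤ (m + q)(|e₀| + |e₁|)`. Since `q < q/√2`,
the diagonal is strictly cheaper than every axis point, so no minimizer lies on an axis.
-/

open Real

lemma lt_div_sqrt_two_of_neg {q : ℝ} (hq : q < 0) : q < q / √2 := by
  rw [lt_div_iff₀ (by positivity)]
  nlinarith [one_lt_sqrt_two]

lemma sqrt_sq_add_sq_self (t : ℝ) : √(t ^ 2 + t ^ 2) = √2 * |t| := by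
  rw [← two_mul, sqrt_mul zero_le_two, sqrt_sq_eq_abs]

lemma sqrt_sq_add_sq_of_eq_zero_or_eq_zero {x y : ℝ} (h : x = 0 ∨ y = 0) :
    √(x ^ 2 + y ^ 2) = |x| + |y| := by
  rcases h with rfl | rfl <;> simp [sqrt_sq_eq_abs]

lemma diagonal_score_eq (m q : ℝ) {t : ℝ} (ht : 0 ≤ t) :
    m * (t + t) + q * √(t ^ 2 + t ^ 2) = 2 * (m + q / √2) * t := by
  rw [sqrt_sq_add_sq_self, abs_of_nonneg ht]
  have hs : √2 ≠ 0 := by positivity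
  field_simp
  linear_combination t * q * sq_sqrt (zero_le_two : (0 : ℝ) ≤ 2)

lemma abs_add_abs_half_div (α k : ℝ) (hα : 0 ≤ α) (hk : 0 < k) :
    |α / (2 * k)| + |α / (2 * k)| = α / k := by
  rw [abs_of_nonneg (by positivity)]
  field_simp
  ring

lemma le_mul_abs_add_abs_of_eq_zero_or_eq_zero {m q α x y : ℝ} (hm : 0 ≤ m)
    (hxy : x = 0 ∨ y = 0) (h : α ≤ m * (x + y) + q * √(x ^ 2 + y ^ 2)) :
    α ≤ (m + q) * (|x| + |y|) := by
  rw [sqrt_sq_add_sq_of_eq_zero_or_eq_zero hxy] at h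
  have : m * (x + y) ≤ m * (|x| + |y|) :=
    mul_le_mul_of_nonneg_left (add_le_add (le_abs_self x) (le_abs_self y)) hm
  linarith

theorem stmt_13_general (c m σ α p : ℝ) (hc : 0 < c) (hσ : 0 < σ)
    (hα : 0 < α) (hp : p < 0) (hfeas : -p * σ < m) :
    let F : Set (Fin 2 → ℝ) :=
      {e | α ≤ m * (e 0 + e 1) + p * σ * Real.sqrt (e 0 ^ 2 + e 1 ^ 2)}
    let t : ℝ := α / (2 * (m + p * σ / Real.sqrt 2))
    ((fun _ : Fin 2 => t) ∈ F ∧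
      c * (|t| + |t|) = c * α / (m + p * σ / Real.sqrt 2)) ∧
    (∀ e ∈ F, (e 0 = 0 ∨ e 1 = 0) →
      c * α / (m + p * σ) ≤ c * (|e 0| + |e 1|)) ∧
    c * α / (m + p * σ / Real.sqrt 2) < c * α / (m + p * σ) ∧
    (∀ e ∈ F, (∀ e' ∈ F, c * (|e 0| + |e 1|) ≤ c * (|e' 0| + |e' 1|)) →
      e 0 ≠ 0 ∧ e 1 ≠ 0) := by
  intro F t
  have hq : p * σ < 0 := mul_neg_of_neg_of_pos hp hσ
  have hq_lt := lt_div_sqrt_two_of_neg hq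
  have hk_axis : 0 < m + p * σ := by linarith
  have hk_diag : 0 < m + p * σ / √2 := by linarith
  have hdiag_mem : (fun _ : Fin 2 => t) ∈ F := by
    show α ≤ m * (t + t) + p * σ * √(t ^ 2 + t ^ 2)
    rw [diagonal_score_eq _ _ (by positivity), mul_div_cancel₀ _ (by positivity)]
  have hdiag_cost : c * (|t| + |t|) = c * α / (m + p * σ / √2) := by
    rw [abs_add_abs_half_div α _ hα.le hk_diag, mul_div_assoc']
  have haxis : ∀ e ∈ F, (e 0 = 0 ∨ e 1 = 0) → c * α / (m + p * σ) ≤ c * (|e 0| + |e 1|) := by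
    intro e he hsupp
    have hcover := le_mul_abs_add_abs_of_eq_zero_or_eq_zero (by linarith) hsupp he
    rw [div_le_iff₀ hk_axis]
    nlinarith
  have hcheaper : c * α / (m + p * σ / √2) < c * α / (m + p * σ) :=
    div_lt_div_of_pos_left (mul_pos hc hα) hk_axis (by linarith)
  refine ⟨⟨hdiag_mem, hdiag_cost⟩, haxis, hcheaper, fun e he hmin => ?_⟩
  have hle := hdiag_cost ▸ hmin _ hdiag_mem
  constructor <;> intro h0
  · linarith [haxis e he (Or.inl h0)]
  · linarith [haxis e he (Or.inr h0)]

/-- Two identical features with mean contribution `m`, variance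
`σ²`, cost multiplier `c`, shortfall `α > 0` and `p < 0` with `m > −pσ`.
(i) The symmetric point `(t, t)` with `t = α/(2(m + pσ/√2))` is feasible with
ℓ1 cost `cα/(m + pσ/√2)`; (ii) any feasible point supported on one coordinate
has cost at least `cα/(m + pσ) > cα/(m + pσ/√2)`; consequently no minimizer of
the ℓ1 cost over the feasible set is supported on a single coordinate. -/
theorem stmt_13 (c m σ α p : ℝ) (hc : 0 < c) (hm : 0 < m) (hσ : 0 < σ)
    (hα : 0 < α) (hp : p < 0) (hfeas : -p * σ < m) :
    let F : Set (Fin 2 → ℝ) :=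
      {e | α ≤ m * (e 0 + e 1) + p * σ * Real.sqrt (e 0 ^ 2 + e 1 ^ 2)}
    let t : ℝ := α / (2 * (m + p * σ / Real.sqrt 2))
    ((fun _ : Fin 2 => t) ∈ F ∧
      c * (|t| + |t|) = c * α / (m + p * σ / Real.sqrt 2)) ∧
    (∀ e ∈ F, (e 0 = 0 ∨ e 1 = 0) →
      c * α / (m + p * σ) ≤ c * (|e 0| + |e 1|)) ∧
    c * α / (m + p * σ / Real.sqrt 2) < c * α / (m + p * σ) ∧
    (∀ e ∈ F, (∀ e' ∈ F, c * (|e 0| + |e 1|) ≤ c * (|e' 0| + |e' 1|)) →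
      e 0 ≠ 0 ∧ e 1 ≠ 0) :=
  stmt_13_general c m σ α p hc hσ hα hp hfeas
end

section
/- Let d ≥ 1, let S be a symmetric positive definite real d×d matrix, let μ ∈ ℝ^d, let α > 0 and p < 0. Suppose e* minimizes the Euclidean norm ‖e‖₂ over the nonempty feasible set { e ∈ ℝ^d : α ≤ μᵀe + p·‖S e‖₂ }. Then e* ≠ 0, the constraint is active (α = μᵀe* + p‖S e*‖₂), and there exist real numbers λ > 0, k₁ > 0, k₂ > 0 such that k₁·e* + k₂·S² e* = λ·μ; equivalently, e* = λ (k₁ I + k₂ Σ)^{-1} μ with Σ = S². -/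
/-!
The constraint function `G e = ⟪μ, e⟫ + p ‖S e‖` is positively homogeneous. Hence a feasible `e`
with `G e > α` could be shrunk by the factor `α / G e < 1` and stay feasible, so `G ≤ α` on the
whole closed ball of radius `‖e*‖`: the constraint is active and `e*` maximizes `G` on the sphere
of that radius. Since `S e* ≠ 0`, `G` is strictly differentiable at `e*`, and the Lagrange
multiplier rule on the sphere makes `∇G(e*) = μ + p Σ e* / ‖S e*‖` parallel to `e*`. Euler's
identity `⟪∇G(e*), e*⟫ = G e* = α > 0` fixes the factor to `α / ‖e*‖²`.
-/

open scoped RealInnerProductSpace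

def PosHomogeneous {E : Type*} [SMul ℝ E] (G : E → ℝ) : Prop :=
  ∀ t : ℝ, 0 < t → ∀ y, G (t • y) = t * G y

section PosHomogeneous

variable {E : Type*} [NormedAddCommGroup E] [NormedSpace ℝ E] {G : E → ℝ}

lemma PosHomogeneous.map_zero (hG : PosHomogeneous G) : G 0 = 0 := by
  have h := hG 2 two_pos 0
  rw [smul_zero] at h
  linarith

lemma HasFDerivAt.apply_self_of_posHomogeneous {G' : StrongDual ℝ E} {x : E}
    (hG : PosHomogeneous G) (h : HasFDerivAt G G' x) : G' x = G x := by
  have hline : HasDerivAt (fun t : ℝ => G (t • x)) (G' x) 1 := by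
    have hx : HasDerivAt (fun t : ℝ => t • x) x 1 := by
      simpa using (hasDerivAt_id (1 : ℝ)).smul_const x
    simpa using (one_smul ℝ x ▸ h).comp_hasDerivAt (1 : ℝ) hx
  have hray : (fun t : ℝ => G (t • x)) =ᶠ[nhds 1] fun t => t * G x :=
    (lt_mem_nhds one_pos).mono fun t ht => hG t ht x
  simpa using hline.unique (((hasDerivAt_id (1 : ℝ)).mul_const (G x)).congr_of_eventuallyEq hray)

lemma PosHomogeneous.apply_le_of_norm_le_of_isMinOn {α : ℝ} {x : E} (hG : PosHomogeneous G)
    (hα : 0 < α) (hx : α ≤ G x) (hmin : IsMinOn (‖·‖) {y | α ≤ G y} x) {y : E}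
    (hy : ‖y‖ ≤ ‖x‖) : G y ≤ α := by
  by_contra! hlt
  have hGy : 0 < G y := hα.trans hlt
  set t := α / G y
  have ht : 0 < t := div_pos hα hGy
  have ht1 : t < 1 := (div_lt_one hGy).mpr hlt
  have hfeas : α ≤ G (t • y) := by
    rw [hG t ht, div_mul_cancel₀ α hGy.ne']
  have hle : ‖x‖ ≤ t * ‖y‖ := by
    simpa [norm_smul, abs_of_pos ht] using hmin hfeas
  have hx0 : x = 0 := norm_le_zero_iff.mp (by nlinarith [norm_nonneg y])
  rw [hx0, hG.map_zero] at hx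
  exact hα.not_ge hx

end PosHomogeneous

section InnerProductSpace

variable {E : Type*} [NormedAddCommGroup E] [InnerProductSpace ℝ E]

theorem hasStrictFDerivAt_norm {x : E} (hx : x ≠ 0) :
    HasStrictFDerivAt (‖·‖) (‖x‖⁻¹ • innerSL ℝ x) x := by
  have h := (hasStrictFDerivAt_norm_sq x).sqrt (by positivity)
  simp only [Real.sqrt_sq (norm_nonneg _)] at h
  convert h using 1
  ext v
  simp only [smul_apply, coe_innerSL_apply, smul_eq_mul, one_div, mul_inv_rev, nsmul_eq_mul,
    Nat.cast_ofNat]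
  field_simp

theorem PosHomogeneous.eq_smul_innerSL_of_isMaxOn_sphere [CompleteSpace E] {G : E → ℝ}
    {G' : StrongDual ℝ E} {x : E} (hx : x ≠ 0) (hG : PosHomogeneous G)
    (hmax : IsMaxOn G (Metric.sphere 0 ‖x‖) x) (hG' : HasStrictFDerivAt G G' x) :
    G' = (G x / ‖x‖ ^ 2) • innerSL ℝ x := by
  have hextr : IsLocalExtrOn G {y | ‖y‖ ^ 2 = ‖x‖ ^ 2} x :=
    (IsMaxOn.localize fun y hy => hmax (by simpa using hy)).isExtr
  obtain ⟨a, b, hab, hlin⟩ :=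
    hextr.exists_multipliers_of_hasStrictFDerivAt_1d (hasStrictFDerivAt_norm_sq x) hG'
  have hEuler : G' x = G x := hG'.hasFDerivAt.apply_self_of_posHomogeneous hG
  have hlin_at (v : E) : a * (2 * ⟪x, v⟫) + b * G' v = 0 := by
    simpa using congrArg (· v) hlin
  have hb : b ≠ 0 := by
    rintro rfl
    have ha : a = 0 := by simpa [hx] using hlin_at x
    exact hab (by simp [ha])
  have hslope (v : E) : G' v = -(2 * a / b) * ⟪x, v⟫ := by
    field_simp
    linear_combination hlin_at v
  have hGx : G x = -(2 * a / b) * ‖x‖ ^ 2 := by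
    rw [← hEuler, hslope, real_inner_self_eq_norm_sq]
  ext v
  simp only [FunLike.coe_smul, Pi.smul_apply, innerSL_apply_apply, smul_eq_mul, hslope, hGx]
  field_simp

theorem IsMinOn.kkt_of_inner_add_mul_norm [CompleteSpace E] {m x : E} {T : E →L[ℝ] E}
    (hT : Function.Injective T) {α p : ℝ} (hα : 0 < α) (hx : α ≤ ⟪m, x⟫ + p * ‖T x‖)
    (hmin : IsMinOn (‖·‖) {y | α ≤ ⟪m, y⟫ + p * ‖T y‖} x) :
    x ≠ 0 ∧ α = ⟪m, x⟫ + p * ‖T x‖ ∧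
      (α / ‖x‖ ^ 2) • x - (p / ‖T x‖) • (ContinuousLinearMap.adjoint T) (T x) = m := by
  set G : E → ℝ := fun y => ⟪m, y⟫ + p * ‖T y‖
  have hG : PosHomogeneous G := by
    intro t ht y
    simp only [G, map_smul, inner_smul_right, norm_smul, Real.norm_eq_abs, abs_of_pos ht]
    ring
  have hx0 : x ≠ 0 := by
    rintro rfl
    exact hα.not_ge (hx.trans_eq hG.map_zero)
  have hTx : T x ≠ 0 := (map_ne_zero_iff T hT).mpr hx0
  have hactive : G x = α := (hG.apply_le_of_norm_le_of_isMinOn hα hx hmin le_rfl).antisymm hx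
  have hmax : IsMaxOn G (Metric.sphere 0 ‖x‖) x := fun y hy =>
    hactive ▸ hG.apply_le_of_norm_le_of_isMinOn hα hx hmin (mem_sphere_zero_iff_norm.mp hy).le
  have hG' := (innerSL ℝ m).hasStrictFDerivAt.add
    (((hasStrictFDerivAt_norm hTx).comp x T.hasStrictFDerivAt).const_mul p)
  have hgrad := hG.eq_smul_innerSL_of_isMaxOn_sphere hx0 hmax hG'
  refine ⟨hx0, hactive.symm, ext_inner_right ℝ fun v => ?_⟩
  have := congrArg (· v) hgrad
  simp only [ContinuousLinearMap.smul_comp, add_apply, coe_innerSL_apply, smul_apply,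
    ContinuousLinearMap.comp_apply, smul_eq_mul, hactive, G] at this
  simp only [inner_sub_left, inner_smul_left, map_div₀, Real.ringHom_apply,
    ContinuousLinearMap.adjoint_inner_left]
  rw [← this]
  ring

end InnerProductSpace

namespace Matrix

variable {ι : Type*} [Fintype ι] [DecidableEq ι]

lemma toEuclideanCLM_injective_of_posDef {S : Matrix ι ι ℝ} (hS : S.PosDef) :
    Function.Injective (toEuclideanCLM (𝕜 := ℝ) S) := fun _ _ h =>
  WithLp.ofLp_injective 2 <| mulVec_injective_iff_isUnit.mpr hS.isUnit <| by
    simpa using congrArg WithLp.ofLp h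

lemma adjoint_toEuclideanCLM_of_isHermitian {S : Matrix ι ι ℝ} (hS : S.IsHermitian) :
    ContinuousLinearMap.adjoint (toEuclideanCLM (𝕜 := ℝ) (n := ι) S) =
      toEuclideanCLM (𝕜 := ℝ) (n := ι) S := by
  rw [← ContinuousLinearMap.star_eq_adjoint, ← map_star, hS.isSelfAdjoint.star_eq]

end Matrix

lemma EuclideanSpace.norm_toLp_eq_sqrt {ι : Type*} [Fintype ι] (x : ι → ℝ) :
    ‖WithLp.toLp 2 x‖ = √(∑ i, x i ^ 2) := by
  simp [EuclideanSpace.norm_eq]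

lemma EuclideanSpace.inner_toLp_toLp_eq_sum {ι : Type*} [Fintype ι] (x y : ι → ℝ) :
    ⟪WithLp.toLp 2 x, WithLp.toLp 2 y⟫ = ∑ i, x i * y i := by
  simp [EuclideanSpace.inner_toLp_toLp, dotProduct, mul_comm]

open WithLp in
theorem stmt_14_general (d : ℕ) (S : Matrix (Fin d) (Fin d) ℝ)
    (hS : S.PosDef)
    (μ : Fin d → ℝ) (α : ℝ) (hα : 0 < α) (p : ℝ) (hp : p < 0)
    (estar : Fin d → ℝ)
    (hfeas : α ≤ ∑ f, μ f * estar f + p * Real.sqrt (∑ f, S.mulVec estar f ^ 2))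
    (hopt : ∀ e : Fin d → ℝ,
      α ≤ ∑ f, μ f * e f + p * Real.sqrt (∑ f, S.mulVec e f ^ 2) →
      Real.sqrt (∑ f, estar f ^ 2) ≤ Real.sqrt (∑ f, e f ^ 2)) :
    estar ≠ 0 ∧
    α = ∑ f, μ f * estar f + p * Real.sqrt (∑ f, S.mulVec estar f ^ 2) ∧
    ∃ lam k₁ k₂ : ℝ, 0 < lam ∧ 0 < k₁ ∧ 0 < k₂ ∧
      ∀ f, k₁ * estar f + k₂ * (S * S).mulVec estar f = lam * μ f := by
  set T := Matrix.toEuclideanCLM (𝕜 := ℝ) S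
  have hT : Function.Injective T := Matrix.toEuclideanCLM_injective_of_posDef hS
  have hconstraint (e : Fin d → ℝ) : ∑ f, μ f * e f + p * √(∑ f, S.mulVec e f ^ 2) =
      ⟪toLp 2 μ, toLp 2 e⟫ + p * ‖T (toLp 2 e)‖ := by
    rw [Matrix.toEuclideanCLM_toLp, EuclideanSpace.norm_toLp_eq_sqrt,
      EuclideanSpace.inner_toLp_toLp_eq_sum]
  have hmin : IsMinOn (‖·‖) {y | α ≤ ⟪toLp 2 μ, y⟫ + p * ‖T y‖} (toLp 2 estar) := by
    intro y hy
    rw [← toLp_ofLp 2 y] at hy ⊢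
    rw [Set.mem_ofPred_eq, ← hconstraint] at hy
    simpa only [Set.mem_ofPred_eq, EuclideanSpace.norm_toLp_eq_sqrt] using hopt _ hy
  obtain ⟨hx0, hactive, hkkt⟩ := hmin.kkt_of_inner_add_mul_norm hT hα (by rwa [← hconstraint])
  rw [Matrix.adjoint_toEuclideanCLM_of_isHermitian hS.isHermitian] at hkkt
  have hx : 0 < ‖toLp 2 estar‖ := norm_pos_iff.mpr hx0
  have hTx : 0 < ‖T (toLp 2 estar)‖ := norm_pos_iff.mpr ((map_ne_zero_iff T hT).mpr hx0)
  refine ⟨fun h => hx0 (by simp [h]), hactive.trans (hconstraint estar).symm,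
    1, α / ‖toLp 2 estar‖ ^ 2, -p / ‖T (toLp 2 estar)‖,
    one_pos, by positivity, div_pos (neg_pos.mpr hp) hTx, fun f => ?_⟩
  have hkkt_f := congrArg (· f) hkkt
  simp only [T, Matrix.toEuclideanCLM_toLp, Matrix.mulVec_mulVec, PiLp.sub_apply, PiLp.smul_apply,
    smul_eq_mul] at hkkt_f ⊢
  rw [← hkkt_f]
  ring

/-- If `e*` minimizes `‖e‖₂` over the feasible set
`{e : α ≤ μᵀe + p ‖S e‖₂}` (with `S` symmetric positive definite, `α > 0`,
`p < 0`), then `e* ≠ 0`, the constraint is active, and there exist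
`λ, k₁, k₂ > 0` with `k₁ e* + k₂ Σ e* = λ μ` where `Σ = S²`. -/
theorem stmt_14 (d : ℕ) (hd : 1 ≤ d) (S : Matrix (Fin d) (Fin d) ℝ)
    (hS : S.PosDef) (hSsymm : S.IsSymm)
    (μ : Fin d → ℝ) (α : ℝ) (hα : 0 < α) (p : ℝ) (hp : p < 0)
    (estar : Fin d → ℝ)
    (hfeas : α ≤ ∑ f, μ f * estar f + p * Real.sqrt (∑ f, S.mulVec estar f ^ 2))
    (hopt : ∀ e : Fin d → ℝ,
      α ≤ ∑ f, μ f * e f + p * Real.sqrt (∑ f, S.mulVec e f ^ 2) →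
      Real.sqrt (∑ f, estar f ^ 2) ≤ Real.sqrt (∑ f, e f ^ 2)) :
    estar ≠ 0 ∧
    α = ∑ f, μ f * estar f + p * Real.sqrt (∑ f, S.mulVec estar f ^ 2) ∧
    ∃ lam k₁ k₂ : ℝ, 0 < lam ∧ 0 < k₁ ∧ 0 < k₂ ∧
      ∀ f, k₁ * estar f + k₂ * (S * S).mulVec estar f = lam * μ f :=
  stmt_14_general d S hS μ α hα p hp estar hfeas hopt
end

section
/- Let d ≥ 1, let Σ be the diagonal d×d matrix with diagonal entries s_f > 0, let S be its (diagonal) positive definite square root with entries √(s_f), let μ ∈ ℝ^d, α > 0 and p < 0. If e* minimizes the Euclidean norm ‖e‖₂ over the nonempty feasible set { e ∈ ℝ^d : α ≤ μᵀe + p·‖S e‖₂ }, then there exist λ > 0, k₁ > 0, k₂ > 0 such that for every coordinate f, e*_f = λ·μ_f / (k₁ + k₂·s_f). In particular, the optimal effort in feature f is increasing in the mean contribution μ_f and, for μ_f > 0, decreasing in the uncertainty s_f. -/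
/-! A minimiser `e*` of `‖e‖₂` on the feasible set is nonzero, and the constraint is active there:
otherwise shrinking `e*` keeps it feasible, since the constraint function
`g e = μᵀe + p ‖S e‖₂` is positively homogeneous. Hence `e*` minimises `‖e‖₂²` on the level set
`{g = α}`, where `g` is smooth (as `S e* ≠ 0`), and the Lagrange multiplier rule gives
`μ + p Σ e* / ‖S e*‖₂ = c e*`; pairing with `e*` and using Euler's identity `g'(e*) e* = g e* = α`
gives `c = α / ‖e*‖₂² > 0`. Solving coordinatewise,
`e*_f = μ_f / (α / ‖e*‖₂² - p s_f / ‖S e*‖₂)`. -/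

open Finset ContinuousLinearMap

section

variable {ι : Type*} [Fintype ι]

noncomputable def dotCLM (c : ι → ℝ) : (ι → ℝ) →L[ℝ] ℝ :=
  ∑ f, c f • proj (R := ℝ) (φ := fun _ : ι => ℝ) f

@[simp]
theorem dotCLM_apply (c v : ι → ℝ) : dotCLM c v = ∑ f, c f * v f := by
  simp [dotCLM]

theorem sum_mul_sq_eq_zero_iff {s e : ι → ℝ} (hs : ∀ f, 0 < s f) :
    ∑ f, s f * e f ^ 2 = 0 ↔ e = 0 := by
  rw [Fintype.sum_eq_zero_iff_of_nonneg fun f => by positivity [hs f]]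
  simp [funext_iff, (hs _).ne']

theorem sum_sq_pos {e : ι → ℝ} (he : e ≠ 0) : 0 < ∑ f, e f ^ 2 := by
  refine lt_of_le_of_ne (by positivity) (Ne.symm ?_)
  simpa using (sum_mul_sq_eq_zero_iff (s := fun _ => 1) fun _ => one_pos).not.2 he

theorem sum_diagonal_sqrt_mulVec_sq [DecidableEq ι] {s : ι → ℝ} (hs : ∀ f, 0 ≤ s f)
    (e : ι → ℝ) :
    ∑ f, ((Matrix.diagonal fun g => √(s g)).mulVec e f) ^ 2 = ∑ f, s f * e f ^ 2 :=
  sum_congr rfl fun f _ => by rw [Matrix.mulVec_diagonal, mul_pow, Real.sq_sqrt (hs f)]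

theorem hasStrictFDerivAt_sum_mul_sq (s e : ι → ℝ) :
    HasStrictFDerivAt (fun x : ι → ℝ => ∑ f, s f * x f ^ 2) (dotCLM fun f => 2 * s f * e f) e := by
  refine (HasStrictFDerivAt.fun_sum (u := univ) fun f _ =>
    ((hasStrictFDerivAt_apply (𝕜 := ℝ) f e).pow 2).const_mul (s f)).congr_fderiv ?_
  ext v
  simp only [Nat.add_one_sub_one, pow_one, nsmul_eq_mul, Nat.cast_ofNat, _root_.sum_apply,
    smul_apply, proj_apply, smul_eq_mul, dotCLM_apply]
  exact sum_congr rfl fun _ _ => by ring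

/-- With `p = Φ⁻¹(δ)`, the `δ`-quantile of the score gain `Xᵀe` for `X ~ N(μ, diag s)`. -/
noncomputable def quantileGain (μ s : ι → ℝ) (p : ℝ) (e : ι → ℝ) : ℝ :=
  ∑ f, μ f * e f + p * √(∑ f, s f * e f ^ 2)

variable (μ s : ι → ℝ) (p : ℝ)

@[simp]
theorem quantileGain_zero : quantileGain μ s p 0 = 0 := by
  simp [quantileGain]

theorem quantileGain_smul {t : ℝ} (ht : 0 ≤ t) (e : ι → ℝ) :
    quantileGain μ s p (t • e) = t * quantileGain μ s p e := by
  have hq : ∑ f, s f * (t • e) f ^ 2 = t ^ 2 * ∑ f, s f * e f ^ 2 := by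
    rw [mul_sum]; exact sum_congr rfl fun _ _ => by simp only [Pi.smul_apply, smul_eq_mul]; ring
  have hl : ∑ f, μ f * (t • e) f = t * ∑ f, μ f * e f := by
    rw [mul_sum]; exact sum_congr rfl fun _ _ => by simp only [Pi.smul_apply, smul_eq_mul]; ring
  rw [quantileGain, quantileGain, hq, hl, Real.sqrt_mul (sq_nonneg t), Real.sqrt_sq ht]
  ring

theorem hasStrictFDerivAt_quantileGain {e : ι → ℝ} (he : ∑ f, s f * e f ^ 2 ≠ 0) :
    HasStrictFDerivAt (quantileGain μ s p)
      (dotCLM fun f => μ f + p * s f * e f / √(∑ f, s f * e f ^ 2)) e := by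
  have hlin : HasStrictFDerivAt (fun x : ι → ℝ => ∑ f, μ f * x f) (dotCLM μ) e :=
    (dotCLM μ).hasStrictFDerivAt.congr_of_eventuallyEq (.of_forall (dotCLM_apply μ))
  refine (hlin.add (((hasStrictFDerivAt_sum_mul_sq s e).sqrt he).const_mul p)).congr_fderiv ?_
  ext v
  simp only [one_div, mul_inv_rev, add_apply, dotCLM_apply, smul_apply, smul_eq_mul, mul_sum,
    add_mul, sum_add_distrib, add_right_inj]
  exact sum_congr rfl fun _ _ => by ring

theorem quantileGain_eq_of_isMinOn {α : ℝ} (hα : 0 < α) {e : ι → ℝ}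
    (he : α ≤ quantileGain μ s p e)
    (hmin : IsMinOn (fun x : ι → ℝ => ∑ f, x f ^ 2) {x | α ≤ quantileGain μ s p x} e) :
    quantileGain μ s p e = α := by
  refine he.antisymm' (not_lt.1 fun hlt => ?_)
  set G := quantileGain μ s p e
  have hG : 0 < G := hα.trans hlt
  set t := α / G
  have ht : t < 1 := (div_lt_one hG).2 hlt
  have hte : quantileGain μ s p (t • e) = α := by
    rw [quantileGain_smul μ s p (by positivity), div_mul_cancel₀ α hG.ne']
  have hle : ∑ f, e f ^ 2 ≤ t ^ 2 * ∑ f, e f ^ 2 := by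
    simpa [mul_pow, ← mul_sum] using hmin (show t • e ∈ _ from hte.ge)
  have he0 : e = 0 := by
    by_contra hne
    have ht2 : t ^ 2 < 1 := pow_lt_one₀ (div_pos hα hG).le ht two_ne_zero
    exact hle.not_gt ((mul_lt_iff_lt_one_left (sum_sq_pos hne)).2 ht2)
  simp [G, he0] at hG

theorem grad_quantileGain_eq_of_isLocalExtrOn {e : ι → ℝ} (hq : 0 < ∑ f, s f * e f ^ 2)
    (hextr : IsLocalExtrOn (fun x : ι → ℝ => ∑ f, x f ^ 2)
      {x | quantileGain μ s p x = quantileGain μ s p e} e) (f : ι) :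
    μ f + p * s f * e f / √(∑ f, s f * e f ^ 2)
      = quantileGain μ s p e / (∑ f, e f ^ 2) * e f := by
  set c : ι → ℝ := fun f => μ f + p * s f * e f / √(∑ f, s f * e f ^ 2)
  obtain ⟨a, b, hab, h⟩ := hextr.exists_multipliers_of_hasStrictFDerivAt_1d
    (hasStrictFDerivAt_quantileGain μ s p hq.ne')
    (by simpa using hasStrictFDerivAt_sum_mul_sq (fun _ => 1) e)
  have hcoord : ∀ f, a * c f + b * (2 * e f) = 0 := fun f => by
    classical
    simpa [Pi.single_apply] using congr($h (Pi.single f 1))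
  have heuler : ∑ f, c f * e f = quantileGain μ s p e := by
    simp only [c, add_mul, sum_add_distrib, quantileGain, add_right_inj]
    calc ∑ f, p * s f * e f / √(∑ f, s f * e f ^ 2) * e f
        = p * (∑ f, s f * e f ^ 2) / √(∑ f, s f * e f ^ 2) := by
          rw [mul_sum, sum_div]; exact sum_congr rfl fun _ _ => by ring
      _ = p * √(∑ f, s f * e f ^ 2) := by rw [mul_div_assoc, Real.div_sqrt]
  have hr : 0 < ∑ f, e f ^ 2 := sum_sq_pos (by rintro rfl; simp at hq)
  have hsum : a * quantileGain μ s p e + 2 * b * ∑ f, e f ^ 2 = 0 := by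
    rw [← heuler, mul_sum, mul_sum, ← sum_add_distrib]
    exact sum_eq_zero fun f _ => by linear_combination e f * hcoord f
  have ha : a ≠ 0 := by
    rintro rfl
    simp_all
  show c f = _
  rw [show quantileGain μ s p e / ∑ f, e f ^ 2 = -(2 * b) / a by
    field_simp; linear_combination hsum]
  field_simp
  linear_combination hcoord f

end

theorem stmt_15_general (d : ℕ) (s : Fin d → ℝ) (hs : ∀ f, 0 < s f)
    (μ : Fin d → ℝ) (α : ℝ) (hα : 0 < α) (p : ℝ) (hp : p < 0)
    (estar : Fin d → ℝ)
    (hfeas : α ≤ ∑ f, μ f * estar f + p * Real.sqrt (∑ f,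
      ((Matrix.diagonal fun g => Real.sqrt (s g)).mulVec estar f) ^ 2))
    (hopt : ∀ e : Fin d → ℝ,
      α ≤ ∑ f, μ f * e f + p * Real.sqrt (∑ f,
        ((Matrix.diagonal fun g => Real.sqrt (s g)).mulVec e f) ^ 2) →
      Real.sqrt (∑ f, estar f ^ 2) ≤ Real.sqrt (∑ f, e f ^ 2)) :
    ∃ lam k₁ k₂ : ℝ, 0 < lam ∧ 0 < k₁ ∧ 0 < k₂ ∧
      (∀ f, estar f = lam * μ f / (k₁ + k₂ * s f)) ∧
      (∀ f, ∀ m₁ m₂ : ℝ, m₁ < m₂ →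
        lam * m₁ / (k₁ + k₂ * s f) < lam * m₂ / (k₁ + k₂ * s f)) ∧
      (∀ f, ∀ s₁ s₂ : ℝ, 0 < s₁ → s₁ < s₂ → 0 < μ f →
        lam * μ f / (k₁ + k₂ * s₂) < lam * μ f / (k₁ + k₂ * s₁)) := by
  simp only [sum_diagonal_sqrt_mulVec_sq fun f => (hs f).le] at hfeas hopt
  change α ≤ quantileGain μ s p estar at hfeas
  have hmin : IsMinOn (fun x => ∑ f, x f ^ 2) {x | α ≤ quantileGain μ s p x} estar :=
    fun e he => (Real.sqrt_le_sqrt_iff (by positivity)).1 (hopt e he)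
  have hact : quantileGain μ s p estar = α := quantileGain_eq_of_isMinOn μ s p hα hfeas hmin
  have hne : estar ≠ 0 := by
    rintro rfl
    simp only [quantileGain_zero] at hact
    exact hα.ne hact
  have hq : 0 < ∑ f, s f * estar f ^ 2 :=
    lt_of_le_of_ne (sum_nonneg fun f _ => by positivity [hs f])
      (Ne.symm ((sum_mul_sq_eq_zero_iff hs).not.2 hne))
  have hextr : IsLocalExtrOn (fun x => ∑ f, x f ^ 2)
      {x | quantileGain μ s p x = quantileGain μ s p estar} estar :=
    Or.inl (hmin.on_subset fun x (hx : _ = _) => (hx.trans hact).ge).localize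
  have hk₁ : 0 < α / ∑ f, estar f ^ 2 := div_pos hα (sum_sq_pos hne)
  have hk₂ : 0 < -p / √(∑ f, s f * estar f ^ 2) := div_pos (neg_pos.2 hp) (Real.sqrt_pos.2 hq)
  refine ⟨1, _, _, one_pos, hk₁, hk₂, fun f => ?_, fun f m₁ m₂ hm => ?_,
    fun f s₁ s₂ h₁ h₂ hμ => ?_⟩
  · have hcoord := grad_quantileGain_eq_of_isLocalExtrOn μ s p hq hextr f
    rw [hact] at hcoord
    rw [one_mul, eq_div_iff (by positivity [hs f])]
    linear_combination -hcoord
  · simpa only [one_mul] using div_lt_div_of_pos_right hm (by positivity [hs f])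
  · simpa only [one_mul] using div_lt_div_of_pos_left hμ (by positivity) (by gcongr)

/-- With diagonal covariance `Σ = diag(s)` (square root
`S = diag(√s)`), if `e*` minimizes `‖e‖₂` over `{e : α ≤ μᵀe + p ‖S e‖₂}`
(with `α > 0`, `p < 0`), then there exist `λ, k₁, k₂ > 0` with
`e*_f = λ μ_f / (k₁ + k₂ s_f)` for all `f`; in particular the optimal effort
in feature `f` is increasing in the mean contribution `μ_f` and, for
`μ_f > 0`, decreasing in the uncertainty `s_f`. -/
theorem stmt_15 (d : ℕ) (hd : 1 ≤ d) (s : Fin d → ℝ) (hs : ∀ f, 0 < s f)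
    (μ : Fin d → ℝ) (α : ℝ) (hα : 0 < α) (p : ℝ) (hp : p < 0)
    (estar : Fin d → ℝ)
    (hfeas : α ≤ ∑ f, μ f * estar f + p * Real.sqrt (∑ f,
      ((Matrix.diagonal fun g => Real.sqrt (s g)).mulVec estar f) ^ 2))
    (hopt : ∀ e : Fin d → ℝ,
      α ≤ ∑ f, μ f * e f + p * Real.sqrt (∑ f,
        ((Matrix.diagonal fun g => Real.sqrt (s g)).mulVec e f) ^ 2) →
      Real.sqrt (∑ f, estar f ^ 2) ≤ Real.sqrt (∑ f, e f ^ 2)) :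
    ∃ lam k₁ k₂ : ℝ, 0 < lam ∧ 0 < k₁ ∧ 0 < k₂ ∧
      (∀ f, estar f = lam * μ f / (k₁ + k₂ * s f)) ∧
      (∀ f, ∀ m₁ m₂ : ℝ, m₁ < m₂ →
        lam * m₁ / (k₁ + k₂ * s f) < lam * m₂ / (k₁ + k₂ * s f)) ∧
      (∀ f, ∀ s₁ s₂ : ℝ, 0 < s₁ → s₁ < s₂ → 0 < μ f →
        lam * μ f / (k₁ + k₂ * s₂) < lam * μ f / (k₁ + k₂ * s₁)) :=
  stmt_15_general d s hs μ α hα p hp estar hfeas hopt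
end
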